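/- If Γ is a finite digraph with no maximal sinks and no maximal cycles, then the only dimension function d: V → ℕ on Γ is the zero function. -/

import Mathlib

def IsDimFun {V E : Type} (s t : E → V) (d : V → ℕ) : Prop :=
  ∀ v : V, (∃ e, s e = v) → d v = ∑ᶠ e : {e : E // s e = v}, d (t e.1)

def Step {V E : Type} (s t : E → V) (a b : V) : Prop := ∃ e, s e = a ∧ t e = b

def Reach {V E : Type} (s t : E → V) : V → V → Prop := Relation.ReflTransGen (Step s t)

structure CycleData {V E : Type} (s t : E → V) where
  n : ℕ
  pos : 0 < n
  ve : ZMod n → V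
  ed : ZMod n → E
  inj : Function.Injective ve
  hs : ∀ i, s (ed i) = ve i
  ht : ∀ i, t (ed i) = ve (i + 1)

def IsSink {V E : Type} (s t : E → V) (v : V) : Prop := ¬ ∃ e, s e = v

def IsMaxSink {V E : Type} (s t : E → V) (v : V) : Prop :=
  IsSink s t v ∧ ∀ c : CycleData s t, ∀ i, ¬ Reach s t (c.ve i) v

def IsMaxCycle {V E : Type} (s t : E → V) (c : CycleData s t) : Prop :=
  ∀ c' : CycleData s t, (∃ i j, Reach s t (c'.ve i) (c.ve j)) →
    Set.range c'.ed = Set.range c.ed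

section Aux

variable {V E : Type} [Finite V] [Finite E] (s t : E → V) (d : V → ℕ)

lemma aux_edge_le (hd : IsDimFun s t d) (e : E) : d (t e) ≤ d (s e) := by
  rw [hd (s e) ⟨e, rfl⟩]
  exact single_le_finsum (f := fun e' : {e' : E // s e' = s e} => d (t e'.1))
    ⟨e, rfl⟩ (Set.toFinite _) (fun _ => Nat.zero_le _)

lemma aux_reach_le (hd : IsDimFun s t d) {a b : V} (h : Reach s t a b) : d b ≤ d a := by
  induction h with
  | refl => exact le_refl _
  | tail _ h2 ih =>
      obtain ⟨e, he1, he2⟩ := h2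
      calc d _ = d (t e) := by rw [he2]
        _ ≤ d (s e) := aux_edge_le s t d hd e
        _ ≤ d a := by rw [he1]; exact ih

lemma aux_pos_succ (hd : IsDimFun s t d) {v : V} (hns : ∃ e, s e = v) (hv : 0 < d v) :
    ∃ e, s e = v ∧ 0 < d (t e) := by
  by_contra hc
  push_neg at hc
  have : d v = 0 := by
    rw [hd v hns]
    exact finsum_eq_zero_of_forall_eq_zero (fun x => Nat.le_zero.mp (hc x.1 x.2))
  omega

lemma aux_cycle_reach (c : CycleData s t) (i j : ZMod c.n) : Reach s t (c.ve i) (c.ve j) := by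
  haveI : NeZero c.n := ⟨c.pos.ne'⟩
  have key : ∀ k : ℕ, Reach s t (c.ve i) (c.ve (i + (k : ZMod c.n))) := by
    intro k
    induction k with
    | zero => simp only [Nat.cast_zero, add_zero]; exact Relation.ReflTransGen.refl
    | succ m ih =>
        refine Relation.ReflTransGen.tail ih ⟨c.ed (i + (m : ZMod c.n)), c.hs _, ?_⟩
        rw [c.ht]
        push_cast
        ring_nf
  have := key (j - i).val
  rwa [ZMod.natCast_val, ZMod.cast_id, add_sub_cancel] at this

lemma aux_cycle_const (hd : IsDimFun s t d) (c : CycleData s t) (i j : ZMod c.n) :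
    d (c.ve i) = d (c.ve j) :=
  le_antisymm (aux_reach_le s t d hd (aux_cycle_reach s t c j i))
    (aux_reach_le s t d hd (aux_cycle_reach s t c i j))

lemma aux_unique_edge (hd : IsDimFun s t d) (c : CycleData s t)
    (hpos : ∀ i, 0 < d (c.ve i)) (i : ZMod c.n) (e : E) (hse : s e = c.ve i)
    (hpe : 0 < d (t e)) : e = c.ed i := by
  classical
  by_contra hne
  haveI : Fintype {e' : E // s e' = c.ve i} := Fintype.ofFinite _
  have h1 : d (c.ve i) = ∑ e' : {e' : E // s e' = c.ve i}, d (t e'.1) := by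
    rw [hd _ ⟨e, hse⟩, finsum_eq_sum_of_fintype]
  have hmem : ({⟨e, hse⟩, ⟨c.ed i, c.hs i⟩} : Finset {e' : E // s e' = c.ve i}) ⊆
      Finset.univ := Finset.subset_univ _
  have hne' : (⟨e, hse⟩ : {e' : E // s e' = c.ve i}) ≠ ⟨c.ed i, c.hs i⟩ := by
    simpa using hne
  have hp : ∑ x ∈ ({⟨e, hse⟩, ⟨c.ed i, c.hs i⟩} : Finset {e' : E // s e' = c.ve i}),
      d (t x.1) = d (t e) + d (t (c.ed i)) :=
    Finset.sum_pair hne'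
  have h2 : d (t e) + d (t (c.ed i)) ≤ ∑ e' : {e' : E // s e' = c.ve i}, d (t e'.1) := by
    rw [← hp]
    exact Finset.sum_le_sum_of_subset hmem
  rw [c.ht] at h2
  have h3 : d (c.ve (i + 1)) = d (c.ve i) := aux_cycle_const s t d hd c _ _
  omega

lemma aux_pos_reach_mem (hd : IsDimFun s t d) (c : CycleData s t)
    (hpos : ∀ i, 0 < d (c.ve i)) (i : ZMod c.n) {w : V}
    (hr : Reach s t (c.ve i) w) (hw : 0 < d w) : ∃ j, w = c.ve j := by
  induction hr with
  | refl => exact ⟨i, rfl⟩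
  | tail h1 h2 ih =>
      obtain ⟨e, he1, he2⟩ := h2
      have hb : 0 < d (s e) := by
        have := aux_edge_le s t d hd e
        rw [he2] at this
        omega
      rw [he1] at hb
      obtain ⟨j, hj⟩ := ih hb
      rw [hj] at he1
      have := aux_unique_edge s t d hd c hpos j e he1 (by rw [he2]; exact hw)
      exact ⟨j + 1, by rw [← he2, this, c.ht]⟩


lemma aux_exists_pos_cycle (hd : IsDimFun s t d)
    (hsink : ∀ v : V, ¬ IsMaxSink s t v) {v : V} (hv : 0 < d v) :
    ∃ c : CycleData s t, ∀ i, 0 < d (c.ve i) := by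
  classical
  by_cases hcase : ∃ u, IsSink s t u ∧ 0 < d u
  · obtain ⟨u, hu, hdu⟩ := hcase
    have h1 := hsink u
    rw [IsMaxSink, not_and] at h1
    have h2 := h1 hu
    push_neg at h2
    obtain ⟨c, i, hr⟩ := h2
    refine ⟨c, fun j => ?_⟩
    have : Reach s t (c.ve j) u :=
      Relation.ReflTransGen.trans (aux_cycle_reach s t c j i) hr
    have := aux_reach_le s t d hd this
    omega
  · push_neg at hcase
    have hns : ∀ u : V, 0 < d u → ∃ e, s e = u := by
      intro u hu
      by_contra hcon
      exact absurd hu (not_lt_of_ge (hcase u hcon))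
    set P := {u : V // 0 < d u} with hP
    haveI : Finite P := Subtype.finite
    have hstep : ∀ p : P, ∃ e, s e = p.1 ∧ 0 < d (t e) :=
      fun p => aux_pos_succ s t d hd (hns p.1 p.2) p.2
    choose Fe hFe1 hFe2 using hstep
    set F : P → P := fun p => ⟨t (Fe p), hFe2 p⟩ with hF
    set f : ℕ → P := fun n => F^[n] ⟨v, hv⟩ with hf
    have hfs : ∀ n, f (n + 1) = F (f n) := by
      intro n
      simp only [hf, Function.iterate_succ_apply']
    obtain ⟨a, b, hab, heq⟩ := Finite.exists_ne_map_eq_of_infinite f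
    have hS : ∃ l, ∃ k, k < l ∧ f k = f l := by
      rcases Nat.lt_or_ge a b with h | h
      · exact ⟨b, a, h, heq⟩
      · exact ⟨a, b, lt_of_le_of_ne h (Ne.symm hab), heq.symm⟩
    set l0 := Nat.find hS with hl0
    obtain ⟨k0, hk0lt, hk0⟩ := Nat.find_spec hS
    have hinj : ∀ x y, x < y → y < l0 → f x ≠ f y := by
      intro x y hxy hy hfe
      exact Nat.find_min hS hy ⟨x, hxy, hfe⟩
    set n := l0 - k0 with hn
    have hnpos : 0 < n := by omega
    haveI : NeZero n := ⟨hnpos.ne'⟩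
    have hlt : ∀ i : ZMod n, k0 + i.val < l0 := by
      intro i
      have := ZMod.val_lt i
      omega
    have hvalsucc : ∀ i : ZMod n, (i + 1).val = (i.val + 1) % n := by
      intro i
      rw [ZMod.val_add, ZMod.val_one_eq_one_mod]
      exact (Nat.mod_modEq 1 n).add_left i.val
    refine ⟨⟨n, hnpos, fun i => (f (k0 + i.val)).1, fun i => Fe (f (k0 + i.val)), ?_, ?_, ?_⟩,
      fun i => (f (k0 + i.val)).2⟩
    · intro i j hij
      have hfij : f (k0 + i.val) = f (k0 + j.val) := Subtype.ext hij
      have : i.val = j.val := by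
        by_contra hne
        rcases Nat.lt_or_ge i.val j.val with h | h
        · exact hinj _ _ (by omega) (hlt j) hfij
        · exact hinj _ _ (by omega) (hlt i) hfij.symm
      exact ZMod.val_injective n this
    · intro i
      exact hFe1 _
    · intro i
      show t (Fe (f (k0 + i.val))) = (f (k0 + (i + 1).val)).1
      have ht1 : t (Fe (f (k0 + i.val))) = (f (k0 + i.val + 1)).1 := by
        rw [hfs]
      rw [ht1, hvalsucc]
      rcases Nat.lt_or_ge (i.val + 1) n with h | h
      · rw [Nat.mod_eq_of_lt h, ← Nat.add_assoc]
      · have hie : i.val + 1 = n := by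
          have := ZMod.val_lt i
          omega
        rw [hie, Nat.mod_self]
        have : k0 + i.val + 1 = l0 := by omega
        rw [this]
        simp only [Nat.add_zero]
        rw [← hk0]

lemma aux_align (hd : IsDimFun s t d) (c c' : CycleData s t)
    (hpos : ∀ i, 0 < d (c.ve i)) (hpos' : ∀ i, 0 < d (c'.ve i))
    (j : ZMod c.n) (i0 : ZMod c'.n) (h0 : c.ve j = c'.ve i0) (k : ℕ) :
    c.ve (j + (k : ZMod c.n)) = c'.ve (i0 + (k : ZMod c'.n)) ∧
      c.ed (j + (k : ZMod c.n)) = c'.ed (i0 + (k : ZMod c'.n)) := by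
  have key : ∀ m : ℕ, c.ve (j + (m : ZMod c.n)) = c'.ve (i0 + (m : ZMod c'.n)) := by
    intro m
    induction m with
    | zero => simpa using h0
    | succ p ih =>
        have hed : c.ed (j + (p : ZMod c.n)) = c'.ed (i0 + (p : ZMod c'.n)) :=
          aux_unique_edge s t d hd c' hpos' _ _ (by rw [c.hs, ih])
            (by rw [c.ht]; exact hpos _)
        have h1 : c.ve (j + (p : ZMod c.n) + 1) = c'.ve (i0 + (p : ZMod c'.n) + 1) := by
          rw [← c.ht, ← c'.ht, hed]
        have e1 : ((p + 1 : ℕ) : ZMod c.n) = (p : ZMod c.n) + 1 := by push_cast; ring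
        have e2 : ((p + 1 : ℕ) : ZMod c'.n) = (p : ZMod c'.n) + 1 := by push_cast; ring
        rw [e1, e2, ← add_assoc, ← add_assoc]
        exact h1
  refine ⟨key k, ?_⟩
  exact aux_unique_edge s t d hd c' hpos' _ _ (by rw [c.hs, key k])
    (by rw [c.ht]; exact hpos _)

end Aux


/-- A finite digraph with no maximal sinks and no maximal cycles admits only the zero
dimension function. -/
theorem stmt16 {V E : Type} [Finite V] [Finite E] (s t : E → V)
    (hsink : ∀ v : V, ¬ IsMaxSink s t v)
    (hcyc : ∀ c : CycleData s t, ¬ IsMaxCycle s t c)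
    (d : V → ℕ) (hd : IsDimFun s t d) :
    d = 0 := by
  funext v
  by_contra hv0
  have hv : 0 < d v := Nat.pos_of_ne_zero (by simpa using hv0)
  obtain ⟨c, hpos⟩ := aux_exists_pos_cycle s t d hd hsink hv
  have h1 := hcyc c
  rw [IsMaxCycle] at h1
  push_neg at h1
  obtain ⟨c', ⟨i, j, hr⟩, hne⟩ := h1
  haveI : NeZero c.n := ⟨c.pos.ne'⟩
  haveI : NeZero c'.n := ⟨c'.pos.ne'⟩
  have hpos' : ∀ i', 0 < d (c'.ve i') := by
    intro i'
    have : Reach s t (c'.ve i') (c.ve j) :=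
      Relation.ReflTransGen.trans (aux_cycle_reach s t c' i' i) hr
    have := aux_reach_le s t d hd this
    have := hpos j
    omega
  obtain ⟨i0, h0⟩ := aux_pos_reach_mem s t d hd c' hpos' i hr (hpos j)
  have halign := aux_align s t d hd c c' hpos hpos' j i0 h0
  apply hne
  apply Set.Subset.antisymm
  · rintro x ⟨b, rfl⟩
    set k := (b - i0).val with hk
    have hb : i0 + (k : ZMod c'.n) = b := by
      rw [hk, ZMod.natCast_val, ZMod.cast_id, add_sub_cancel]
    rw [← hb, ← (halign k).2]
    exact ⟨j + (k : ZMod c.n), rfl⟩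
  · rintro x ⟨a, rfl⟩
    set k := (a - j).val with hk
    have ha : j + (k : ZMod c.n) = a := by
      rw [hk, ZMod.natCast_val, ZMod.cast_id, add_sub_cancel]
    rw [← ha, (halign k).2]
    exact ⟨i0 + (k : ZMod c'.n), rfl⟩
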